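/- Every compatible set S of traces admits a least upper bound under the prefix order: there exists a trace u such that x ≤ u for all x ∈ S, and every trace z satisfying x ≤ z for all x ∈ S satisfies u ≤ z. Moreover, every operation occurring in u occurs in some element of S. -/

import Mathlib

/-!
Fix a schedule `t` of a common extension of `S`. A set of occurrences of `t` that is closed
downwards under the order of equal or conflicting operations can be moved to the front of `t`
without changing its trace: by induction on `t`, a selected last operation commutes past the
unselected ones. Doing this for the union of the contents of the elements of `S` gives a prefix
`A` of `t` containing every element of `S`, since a prefix of a trace is determined by its content.
Another common extension `t'` yields in the same way `A'` with the same content, and `A ~ A'`: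
two conflicting occurrences of that content always lie in a single element of `S` (else `t` would
order them both ways), and that element fixes their order in both `A` and `A'`.
-/

open Classical

universe u v w

/-- Operations `a` and `b` commute in state `q`. -/
def CommuteIn {Q : Type u} {O : Type v} {R : Type w}
    (σ : O → Q → R × Q) (a b : O) (q : Q) : Prop :=
  ∃ (ra rb : R) (q1 q2 q' : Q),
    σ a q = (ra, q1) ∧ σ b q1 = (rb, q') ∧ σ b q = (rb, q2) ∧ σ a q2 = (ra, q')

/-- Operations `a` and `b` conflict: they fail to commute in some state. -/
def Conflict {Q : Type u} {O : Type v} {R : Type w}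
    (σ : O → Q → R × Q) (a b : O) : Prop :=
  ∃ q : Q, ¬ CommuteIn σ a b q

/-- Position in `s` of the `i`-th (0-indexed) occurrence of `o`, if it exists. -/
noncomputable def occIdx {O : Type v} (s : List O) (o : O) (i : ℕ) : Option ℕ :=
  ((List.range s.length).filter (fun k => decide (s[k]? = some o)))[i]?

/-- The `i`-th occurrence of `a` precedes the `j`-th occurrence of `b` in `s`. -/
def Precedes {O : Type v} (s : List O) (a : O) (i : ℕ) (b : O) (j : ℕ) : Prop :=
  ∃ p q : ℕ, occIdx s a i = some p ∧ occIdx s b j = some q ∧ p < q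

/-- Schedule equivalence: same multiset of operations, and the relative order of
any two occurrences of conflicting operations is the same. -/
def ScheduleEquiv {Q : Type u} {O : Type v} {R : Type w}
    (σ : O → Q → R × Q) (s s' : List O) : Prop :=
  (↑s : Multiset O) = (↑s' : Multiset O) ∧
  ∀ (a b : O) (i j : ℕ), Conflict σ a b →
    (Precedes s a i b j ↔ Precedes s' a i b j)

/-- `~` is an equivalence relation (proved here to form the quotient). -/
def scheduleSetoid {Q : Type u} {O : Type v} {R : Type w}
    (σ : O → Q → R × Q) : Setoid (List O) :=
  ⟨ScheduleEquiv σ,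
    ⟨fun _ => ⟨rfl, fun _ _ _ _ _ => Iff.rfl⟩,
     fun h => ⟨h.1.symm, fun a b i j hc => (h.2 a b i j hc).symm⟩,
     fun h h' => ⟨h.1.trans h'.1, fun a b i j hc => (h.2 a b i j hc).trans (h'.2 a b i j hc)⟩⟩⟩

/-- Traces: equivalence classes of schedules. -/
def Trace {Q : Type u} {O : Type v} {R : Type w} (σ : O → Q → R × Q) :=
  Quotient (scheduleSetoid σ)

/-- Prefix order on traces. -/
def TraceLe {Q : Type u} {O : Type v} {R : Type w}
    (σ : O → Q → R × Q) (x y : Trace σ) : Prop :=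
  ∃ s u : List O, x = Quotient.mk (scheduleSetoid σ) s ∧
    y = Quotient.mk (scheduleSetoid σ) (s ++ u)

/-- Executing a schedule from state `q`. -/
def execTrace {Q : Type u} {O : Type v} {R : Type w}
    (σ : O → Q → R × Q) : List O → Q → List (R × Q)
  | [], _ => []
  | o :: s, q => (σ o q) :: execTrace σ s (σ o q).2

/-- Return value of the `i`-th (0-indexed) occurrence of `o` in `s`,
executed from the initial state `q0`. -/
noncomputable def retStar {Q : Type u} {O : Type v} {R : Type w}
    (σ : O → Q → R × Q) (q0 : Q) (o : O) (i : ℕ) (s : List O) : Option R :=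
  (occIdx s o i).bind fun k => ((execTrace σ s q0)[k]?).map Prod.fst
/-- A set of traces is compatible if it has a common extension. -/
def Compatible {Q : Type u} {O : Type v} {R : Type w}
    (σ : O → Q → R × Q) (S : Set (Trace σ)) : Prop :=
  ∃ z : Trace σ, ∀ x ∈ S, TraceLe σ x z


noncomputable def occPositions {O : Type v} (s : List O) (o : O) : List ℕ :=
  (List.range s.length).filter (fun k => decide (s[k]? = some o))

section Occurrences

variable {O : Type v} {s : List O} {o : O} {i p : ℕ}

theorem occIdx_eq (s : List O) (o : O) (i : ℕ) : occIdx s o i = (occPositions s o)[i]? := rfl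

theorem occPositions_append (s w : List O) (o : O) :
    occPositions (s ++ w) o = occPositions s o ++ (occPositions w o).map (s.length + ·) := by
  rw [occPositions, List.length_append, List.range_add, List.filter_append, List.filter_map]
  congr 1
  · refine List.filter_congr fun k hk => ?_
    rw [List.getElem?_append_left (List.mem_range.mp hk)]
  · congr 1
    refine List.filter_congr fun k _ => ?_
    simp [List.getElem?_append_right (Nat.le_add_right s.length k)]

theorem length_occPositions (s : List O) (o : O) : (occPositions s o).length = s.count o := by
  induction s with
  | nil => rfl
  | cons c s ih =>
    rw [← List.singleton_append, occPositions_append, List.length_append, List.length_map, ih,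
      List.count_append, List.count_singleton]
    by_cases h : c = o <;> simp [occPositions, h]

theorem occIdx_isSome_iff : (occIdx s o i).isSome ↔ i < s.count o := by
  rw [occIdx_eq, isSome_getElem?, length_occPositions]

theorem occIdx_lt_length (h : occIdx s o i = some p) : p < s.length := by
  have := List.mem_of_getElem? h
  simp only [List.mem_filter, List.mem_range] at this
  exact this.1

theorem occIdx_append (s w : List O) (o : O) (i : ℕ) :
    occIdx (s ++ w) o i =
      if i < s.count o then occIdx s o i
      else (occIdx w o (i - s.count o)).map (s.length + ·) := by
  have hlen := length_occPositions s o
  rw [occIdx_eq, occPositions_append]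
  split
  · rw [List.getElem?_append_left (by omega), occIdx_eq]
  · rw [List.getElem?_append_right (by omega), List.getElem?_map, hlen, occIdx_eq]

end Occurrences

section PrecedesAppend

variable {O : Type v} {s w : List O} {a b : O} {i j : ℕ}

theorem Precedes.lt_count (h : Precedes s a i b j) : i < s.count a ∧ j < s.count b := by
  obtain ⟨p, q, hp, hq, -⟩ := h
  exact ⟨occIdx_isSome_iff.mp (by simp [hp]), occIdx_isSome_iff.mp (by simp [hq])⟩

theorem Precedes.asymm (h : Precedes s a i b j) : ¬ Precedes s b j a i := by
  obtain ⟨p, q, hp, hq, hpq⟩ := h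
  rintro ⟨q', p', hq', hp', hqp⟩
  rw [hp, Option.some_inj] at hp'
  rw [hq, Option.some_inj] at hq'
  omega

theorem precedes_append_iff_left (ha : i < s.count a) (hb : j < s.count b) :
    Precedes (s ++ w) a i b j ↔ Precedes s a i b j := by
  simp only [Precedes, occIdx_append, if_pos ha, if_pos hb]

theorem precedes_append_iff_right (ha : s.count a ≤ i) (hb : s.count b ≤ j) :
    Precedes (s ++ w) a i b j ↔ Precedes w a (i - s.count a) b (j - s.count b) := by
  simp only [Precedes, occIdx_append, if_neg (Nat.not_lt.mpr ha), if_neg (Nat.not_lt.mpr hb),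
    Option.map_eq_some_iff]
  constructor
  · rintro ⟨_, _, ⟨p, hp, rfl⟩, ⟨q, hq, rfl⟩, hpq⟩
    exact ⟨p, q, hp, hq, by omega⟩
  · rintro ⟨p, q, hp, hq, hpq⟩
    exact ⟨_, _, ⟨p, hp, rfl⟩, ⟨q, hq, rfl⟩, by omega⟩

theorem precedes_append_iff_of_lt_of_le (ha : i < s.count a) (hb : s.count b ≤ j) :
    Precedes (s ++ w) a i b j ↔ j < (s ++ w).count b := by
  refine ⟨fun h => h.lt_count.2, fun hj => ?_⟩
  obtain ⟨p, hp⟩ := Option.isSome_iff_exists.mp (occIdx_isSome_iff.mpr ha)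
  have hw : j - s.count b < w.count b := by rw [List.count_append] at hj; omega
  obtain ⟨q, hq⟩ := Option.isSome_iff_exists.mp (occIdx_isSome_iff.mpr hw)
  refine ⟨p, s.length + q, ?_, ?_, by have := occIdx_lt_length hp; omega⟩
  · rw [occIdx_append, if_pos ha, hp]
  · rw [occIdx_append, if_neg (Nat.not_lt.mpr hb), hq, Option.map_some]

theorem not_precedes_append_of_le_of_lt (ha : s.count a ≤ i) (hb : j < s.count b) :
    ¬ Precedes (s ++ w) a i b j := by
  rintro ⟨p, q, hp, hq, hpq⟩
  rw [occIdx_append, if_neg (Nat.not_lt.mpr ha), Option.map_eq_some_iff] at hp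
  rw [occIdx_append, if_pos hb] at hq
  obtain ⟨p', -, rfl⟩ := hp
  have := occIdx_lt_length hq
  omega

theorem precedes_append_iff_of_not_mem_left (ha : a ∉ s) (hb : b ∉ s) :
    Precedes (s ++ w) a i b j ↔ Precedes w a i b j := by
  rw [← List.count_eq_zero] at ha hb
  have h := precedes_append_iff_right (s := s) (w := w) (a := a) (b := b) (i := i) (j := j)
    (by omega) (by omega)
  rwa [ha, hb, Nat.sub_zero, Nat.sub_zero] at h

theorem precedes_append_iff_of_not_mem_right (ha : a ∉ w) (hb : b ∉ w) :
    Precedes (s ++ w) a i b j ↔ Precedes s a i b j := by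
  rw [← List.count_eq_zero] at ha hb
  by_cases hij : i < s.count a ∧ j < s.count b
  · exact precedes_append_iff_left hij.1 hij.2
  · refine iff_of_false (fun h => hij ?_) (fun h => hij h.lt_count)
    simpa [List.count_append, ha, hb] using h.lt_count

end PrecedesAppend

section ScheduleEquivalence

variable {Q : Type u} {O : Type v} {R : Type w} {σ : O → Q → R × Q} {s s' t w w' : List O}
  {a b : O} {i j : ℕ}

theorem Conflict.symm (h : Conflict σ a b) : Conflict σ b a := by
  obtain ⟨q, hq⟩ := h
  exact ⟨q, fun ⟨ra, rb, q₁, q₂, q', h₁, h₂, h₃, h₄⟩ =>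
    hq ⟨rb, ra, q₂, q₁, q', h₃, h₄, h₁, h₂⟩⟩

theorem ScheduleEquiv.refl (s : List O) : ScheduleEquiv σ s s := (scheduleSetoid σ).iseqv.refl s

theorem ScheduleEquiv.trans (h : ScheduleEquiv σ s s') (h' : ScheduleEquiv σ s' t) :
    ScheduleEquiv σ s t :=
  (scheduleSetoid σ).iseqv.trans h h'

theorem ScheduleEquiv.count_eq (h : ScheduleEquiv σ s s') (o : O) : s.count o = s'.count o :=
  (Multiset.coe_eq_coe.mp h.1).count_eq o

theorem scheduleEquiv_of_count_eq (hc : ∀ o, s.count o = s'.count o)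
    (hp : ∀ a b i j, Conflict σ a b → (Precedes s a i b j ↔ Precedes s' a i b j)) :
    ScheduleEquiv σ s s' :=
  ⟨Multiset.coe_eq_coe.mpr (List.perm_iff_count.mpr hc), hp⟩

theorem ScheduleEquiv.append (h₁ : ScheduleEquiv σ s s') (h₂ : ScheduleEquiv σ w w') :
    ScheduleEquiv σ (s ++ w) (s' ++ w') := by
  have hs := h₁.count_eq
  have hw := h₂.count_eq
  refine scheduleEquiv_of_count_eq (fun o => by rw [List.count_append, List.count_append, hs, hw])
    fun a b i j hab => ?_
  rcases lt_or_ge i (s.count a) with ha | ha <;> rcases lt_or_ge j (s.count b) with hb | hb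
  · rw [precedes_append_iff_left ha hb,
      precedes_append_iff_left (by rwa [← hs]) (by rwa [← hs])]
    exact h₁.2 a b i j hab
  · rw [precedes_append_iff_of_lt_of_le ha hb,
      precedes_append_iff_of_lt_of_le (by rwa [← hs]) (by rwa [← hs]),
      List.count_append, List.count_append, hs, hw]
  · exact iff_of_false (not_precedes_append_of_le_of_lt ha hb)
      (not_precedes_append_of_le_of_lt (by rwa [← hs]) (by rwa [← hs]))
  · rw [precedes_append_iff_right ha hb,
      precedes_append_iff_right (by rwa [← hs]) (by rwa [← hs]), hs, hs]
    exact h₂.2 _ _ _ _ hab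

theorem ScheduleEquiv.append_comm (h : ∀ x ∈ s, ∀ y ∈ w, x ≠ y ∧ ¬ Conflict σ x y) :
    ScheduleEquiv σ (s ++ w) (w ++ s) := by
  refine ⟨Multiset.coe_eq_coe.mpr List.perm_append_comm, fun a b i j hab => ?_⟩
  by_cases hw : a ∉ w ∧ b ∉ w
  · rw [precedes_append_iff_of_not_mem_right hw.1 hw.2,
      precedes_append_iff_of_not_mem_left hw.1 hw.2]
  by_cases hs : a ∉ s ∧ b ∉ s
  · rw [precedes_append_iff_of_not_mem_left hs.1 hs.2,
      precedes_append_iff_of_not_mem_right hs.1 hs.2]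
  exfalso
  simp only [not_and_or, not_not] at hw hs
  rcases hs with has | hbs <;> rcases hw with haw | hbw
  · exact (h a has a haw).1 rfl
  · exact (h a has b hbw).2 hab
  · exact (h b hbs a haw).2 hab.symm
  · exact (h b hbs b hbw).1 rfl

theorem precedes_iff_of_append (h : ScheduleEquiv σ (s ++ w) t) (hab : Conflict σ a b)
    (ha : i < s.count a) (hb : j < s.count b) : Precedes s a i b j ↔ Precedes t a i b j :=
  (precedes_append_iff_left ha hb).symm.trans (h.2 a b i j hab)

theorem ScheduleEquiv.of_append_of_count_eq (h : ScheduleEquiv σ (s ++ w) t)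
    (h' : ScheduleEquiv σ (s' ++ w') t) (hc : ∀ o, s.count o = s'.count o) :
    ScheduleEquiv σ s s' := by
  refine scheduleEquiv_of_count_eq hc fun a b i j hab => ?_
  by_cases hij : i < s.count a ∧ j < s.count b
  · rw [precedes_iff_of_append h hab hij.1 hij.2,
      precedes_iff_of_append h' hab (by rw [← hc]; exact hij.1) (by rw [← hc]; exact hij.2)]
  · exact iff_of_false (fun hp => hij hp.lt_count)
      (fun hp => hij (by rw [hc, hc]; exact hp.lt_count))

end ScheduleEquivalence

/-- `C o i` stands for the `i`-th occurrence of `o`. The down-closed sets of occurrences of `t`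
are exactly the contents of the prefixes of its trace. -/
structure IsDownClosed {Q : Type u} {O : Type v} {R : Type w} (σ : O → Q → R × Q) (t : List O)
    (C : O → ℕ → Prop) : Prop where
  of_lt : ∀ {o i j}, i < j → C o j → C o i
  of_precedes : ∀ {a b i j}, Conflict σ a b → Precedes t a i b j → C b j → C a i

namespace IsDownClosed

variable {Q : Type u} {O : Type v} {R : Type w} {σ : O → Q → R × Q} {s t w : List O}
  {C : O → ℕ → Prop}

theorem of_append (hC : IsDownClosed σ t C) (h : ScheduleEquiv σ (s ++ w) t) :
    IsDownClosed σ s C where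
  of_lt := hC.of_lt
  of_precedes hab hp :=
    hC.of_precedes hab ((precedes_iff_of_append h hab hp.lt_count.1 hp.lt_count.2).mp hp)

theorem ne_and_not_conflict_of_mem {A B : List O} {c y : O} (hC : IsDownClosed σ (t ++ [c]) C)
    (hc : C c (t.count c)) (hAB : ScheduleEquiv σ (A ++ B) t)
    (hA : ∀ o i, i < A.count o ↔ i < t.count o ∧ C o i) (hy : y ∈ B) :
    c ≠ y ∧ ¬ Conflict σ c y := by
  have hj : A.count y < t.count y := by
    rw [← hAB.count_eq, List.count_append]
    have := List.count_pos_iff.mpr hy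
    omega
  have hnot : ¬ C y (A.count y) := fun h => (lt_irrefl _) ((hA y _).mpr ⟨hj, h⟩)
  refine ⟨?_, fun hcy => hnot (hC.of_precedes hcy.symm ?_ hc)⟩
  · rintro rfl
    exact hnot (hC.of_lt hj hc)
  · exact (precedes_append_iff_of_lt_of_le hj le_rfl).mpr (by simp)

theorem exists_split (hC : IsDownClosed σ t C) :
    ∃ A B, ScheduleEquiv σ (A ++ B) t ∧
      ∀ o i, i < A.count o ↔ i < t.count o ∧ C o i := by
  induction t using List.reverseRecOn with
  | nil => exact ⟨[], [], ScheduleEquiv.refl _, by simp⟩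
  | append_singleton t c ih =>
    obtain ⟨A, B, hAB, hA⟩ := ih (hC.of_append (ScheduleEquiv.refl _))
    have hABc : ScheduleEquiv σ (A ++ (B ++ [c])) (t ++ [c]) := by
      simpa only [List.append_assoc] using hAB.append (ScheduleEquiv.refl [c])
    by_cases hc : C c (t.count c)
    · refine ⟨A ++ [c], B, ?_, fun o i => ?_⟩
      · have hswap : ScheduleEquiv σ ([c] ++ B) (B ++ [c]) := ScheduleEquiv.append_comm
          (by simpa using fun y hy => hC.ne_and_not_conflict_of_mem hc hAB hA hy)
        simpa only [List.append_assoc] using ((ScheduleEquiv.refl A).append hswap).trans hABc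
      · rw [List.count_append, List.count_append, List.count_singleton]
        by_cases hoc : c = o
        · subst hoc
          have hAc : A.count c = t.count c := eq_of_forall_lt_iff fun i => by
            rw [hA]
            exact ⟨And.left, fun hi => ⟨hi, hC.of_lt hi hc⟩⟩
          simp only [beq_self_eq_true, if_true, hAc]
          refine ⟨fun hi => ⟨hi, ?_⟩, And.left⟩
          rcases (Nat.lt_succ_iff.mp hi).lt_or_eq with hi | rfl
          · exact hC.of_lt hi hc
          · exact hc
        · simpa [hoc] using hA o i
    · refine ⟨A, B ++ [c], hABc, fun o i => ?_⟩
      rw [List.count_append, List.count_singleton]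
      by_cases hoc : c = o
      · subst hoc
        simp only [beq_self_eq_true, if_true, hA]
        refine ⟨fun ⟨hi, hCi⟩ => ⟨by omega, hCi⟩, fun ⟨hi, hCi⟩ => ⟨?_, hCi⟩⟩
        refine lt_of_le_of_ne (by omega) ?_
        rintro rfl
        exact hc hCi
      · simpa [hoc] using hA o i

end IsDownClosed

section Traces

variable {Q : Type u} {O : Type v} {R : Type w} {σ : O → Q → R × Q} {S : Set (Trace σ)}
  {x x₁ x₂ : Trace σ} {s t A A' B : List O} {a b : O} {i j : ℕ}

noncomputable def Trace.count (x : Trace σ) (o : O) : ℕ :=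
  Quotient.lift (s := scheduleSetoid σ) (fun s : List O => s.count o) (fun _ _ h => h.count_eq o) x

theorem traceLe_mk_iff :
    TraceLe σ x (Quotient.mk (scheduleSetoid σ) t) ↔
      ∃ s w, x = Quotient.mk (scheduleSetoid σ) s ∧ ScheduleEquiv σ (s ++ w) t :=
  ⟨fun ⟨s, w, hx, ht⟩ => ⟨s, w, hx, Quotient.exact ht.symm⟩,
    fun ⟨s, w, hx, h⟩ => ⟨s, w, hx, (Quotient.sound h).symm⟩⟩

theorem TraceLe.count_le {y : Trace σ} (h : TraceLe σ x y) (o : O) : x.count o ≤ y.count o := by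
  obtain ⟨s, w, rfl, rfl⟩ := h
  show s.count o ≤ (s ++ w).count o
  simp [List.count_append]

theorem isDownClosed_of_traceLe (h : TraceLe σ x (Quotient.mk (scheduleSetoid σ) t)) :
    IsDownClosed σ t (fun o i => i < x.count o) := by
  obtain ⟨s, w, rfl, hsw⟩ := traceLe_mk_iff.mp h
  refine ⟨lt_trans, fun hab hp (hj : _ < s.count _) => ?_⟩
  by_contra hi
  exact not_precedes_append_of_le_of_lt (not_lt.mp hi) hj ((hsw.2 _ _ _ _ hab).mpr hp)

theorem isDownClosed_of_forall_traceLe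
    (h : ∀ x ∈ S, TraceLe σ x (Quotient.mk (scheduleSetoid σ) t)) :
    IsDownClosed σ t (fun o i => ∃ x ∈ S, i < x.count o) where
  of_lt hij := fun ⟨x, hx, hj⟩ => ⟨x, hx, hij.trans hj⟩
  of_precedes hab hp := fun ⟨x, hx, hj⟩ =>
    ⟨x, hx, (isDownClosed_of_traceLe (h x hx)).of_precedes hab hp hj⟩

theorem traceLe_mk_of_count_le (hx : TraceLe σ x (Quotient.mk (scheduleSetoid σ) t))
    (hAB : ScheduleEquiv σ (A ++ B) t) (hc : ∀ o, x.count o ≤ A.count o) :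
    TraceLe σ x (Quotient.mk (scheduleSetoid σ) A) := by
  obtain ⟨A₁, B₁, hA₁B₁, hA₁⟩ :=
    ((isDownClosed_of_traceLe hx).of_append hAB).exists_split
  obtain ⟨s, w, rfl, hsw⟩ := traceLe_mk_iff.mp hx
  have hcount : ∀ o, s.count o = A₁.count o := fun o => eq_of_forall_lt_iff fun i => by
    rw [hA₁]
    exact ⟨fun hi => ⟨hi.trans_le (hc o : s.count o ≤ _), hi⟩, And.right⟩
  have hA₁t : ScheduleEquiv σ (A₁ ++ (B₁ ++ B)) t := by
    simpa only [List.append_assoc] using (hA₁B₁.append (ScheduleEquiv.refl B)).trans hAB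
  exact ⟨A₁, B₁, Quotient.sound (hsw.of_append_of_count_eq hA₁t hcount),
    (Quotient.sound hA₁B₁).symm⟩

theorem count_lt_or_count_lt_of_traceLe
    (hx₁ : TraceLe σ x₁ (Quotient.mk (scheduleSetoid σ) t))
    (hx₂ : TraceLe σ x₂ (Quotient.mk (scheduleSetoid σ) t)) (hab : Conflict σ a b)
    (ha : i < x₁.count a) (hb : j < x₂.count b) : i < x₂.count a ∨ j < x₁.count b := by
  obtain ⟨s₁, w₁, rfl, h₁⟩ := traceLe_mk_iff.mp hx₁
  obtain ⟨s₂, w₂, rfl, h₂⟩ := traceLe_mk_iff.mp hx₂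
  replace ha : i < s₁.count a := ha
  replace hb : j < s₂.count b := hb
  show i < s₂.count a ∨ j < s₁.count b
  by_contra! hle
  have hta : i < t.count a := by rw [← h₁.count_eq, List.count_append]; omega
  have htb : j < t.count b := by rw [← h₂.count_eq, List.count_append]; omega
  have hab₁ : Precedes t a i b j := (h₁.2 a b i j hab).mp
    ((precedes_append_iff_of_lt_of_le ha hle.2).mpr (by rwa [h₁.count_eq]))
  have hba₂ : Precedes t b j a i := (h₂.2 b a j i hab.symm).mp
    ((precedes_append_iff_of_lt_of_le hb hle.1).mpr (by rwa [h₂.count_eq]))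
  exact hab₁.asymm hba₂

theorem scheduleEquiv_of_forall_traceLe
    (hA : ∀ x ∈ S, TraceLe σ x (Quotient.mk (scheduleSetoid σ) A))
    (hA' : ∀ x ∈ S, TraceLe σ x (Quotient.mk (scheduleSetoid σ) A'))
    (hcA : ∀ o i, i < A.count o ↔ ∃ x ∈ S, i < x.count o)
    (hcA' : ∀ o i, i < A'.count o ↔ ∃ x ∈ S, i < x.count o) :
    ScheduleEquiv σ A A' := by
  have hc : ∀ o, A.count o = A'.count o :=
    fun o => eq_of_forall_lt_iff fun i => (hcA o i).trans (hcA' o i).symm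
  refine scheduleEquiv_of_count_eq hc fun a b i j hab => ?_
  by_cases hij : i < A.count a ∧ j < A.count b
  swap
  · exact iff_of_false (fun hp => hij hp.lt_count)
      (fun hp => hij (by rw [hc, hc]; exact hp.lt_count))
  obtain ⟨x₁, hx₁, hi⟩ := (hcA a i).mp hij.1
  obtain ⟨x₂, hx₂, hj⟩ := (hcA b j).mp hij.2
  obtain ⟨x, hx, hia, hjb⟩ : ∃ x ∈ S, i < x.count a ∧ j < x.count b :=
    (count_lt_or_count_lt_of_traceLe (hA x₁ hx₁) (hA x₂ hx₂) hab hi hj).elim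
      (fun h => ⟨x₂, hx₂, h, hj⟩) (fun h => ⟨x₁, hx₁, hi, h⟩)
  obtain ⟨s, w, rfl, hs⟩ := traceLe_mk_iff.mp (hA x hx)
  obtain ⟨s', w', hss', hs'⟩ := traceLe_mk_iff.mp (hA' _ hx)
  have hss' : ScheduleEquiv σ s s' := Quotient.exact hss'
  replace hia : i < s.count a := hia
  replace hjb : j < s.count b := hjb
  rw [← precedes_iff_of_append hs hab hia hjb,
    ← precedes_iff_of_append hs' hab (by rwa [← hss'.count_eq]) (by rwa [← hss'.count_eq])]
  exact hss'.2 a b i j hab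

theorem exists_prefix_of_forall_traceLe
    (ht : ∀ x ∈ S, TraceLe σ x (Quotient.mk (scheduleSetoid σ) t)) :
    ∃ A B, ScheduleEquiv σ (A ++ B) t ∧
      (∀ x ∈ S, TraceLe σ x (Quotient.mk (scheduleSetoid σ) A)) ∧
      ∀ o i, i < A.count o ↔ ∃ x ∈ S, i < x.count o := by
  obtain ⟨A, B, hAB, hA⟩ := (isDownClosed_of_forall_traceLe ht).exists_split
  have hcA : ∀ o i, i < A.count o ↔ ∃ x ∈ S, i < x.count o := fun o i =>
    (hA o i).trans ⟨And.right, fun ⟨x, hx, hi⟩ =>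
      ⟨hi.trans_le ((ht x hx).count_le o : _ ≤ t.count o), x, hx, hi⟩⟩
  exact ⟨A, B, hAB, fun x hx => traceLe_mk_of_count_le (ht x hx) hAB
    (fun o => le_of_forall_lt fun i hi => (hcA o i).mpr ⟨x, hx, hi⟩), hcA⟩

end Traces

/-- every compatible set of traces admits a least upper bound
under the prefix order; moreover, every operation occurring in the least upper
bound occurs in some element of the set. -/
theorem trace_lub_exists
    {Q : Type u} {O : Type v} {R : Type w} (σ : O → Q → R × Q)
    (S : Set (Trace σ)) (hS : Compatible σ S) :
    ∃ u : Trace σ,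
      (∀ x ∈ S, TraceLe σ x u) ∧
      (∀ z : Trace σ, (∀ x ∈ S, TraceLe σ x z) → TraceLe σ u z) ∧
      (∀ su : List O, u = Quotient.mk (scheduleSetoid σ) su →
        ∀ o ∈ su, ∃ x ∈ S, ∃ sx : List O,
          x = Quotient.mk (scheduleSetoid σ) sx ∧ o ∈ sx) := by
  obtain ⟨z, hz⟩ := hS
  obtain ⟨t, rfl⟩ := Quotient.exists_rep z
  obtain ⟨A, -, -, hA, hcA⟩ := exists_prefix_of_forall_traceLe hz
  refine ⟨Quotient.mk (scheduleSetoid σ) A, hA, fun z' hz' => ?_, fun su hsu o ho => ?_⟩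
  · obtain ⟨t', rfl⟩ := Quotient.exists_rep z'
    obtain ⟨A', B', hA'B', hA', hcA'⟩ := exists_prefix_of_forall_traceLe hz'
    exact ⟨A', B', Quotient.sound (scheduleEquiv_of_forall_traceLe hA hA' hcA hcA'),
      (Quotient.sound hA'B').symm⟩
  · have hsu : ScheduleEquiv σ A su := Quotient.exact hsu
    obtain ⟨x, hx, hox⟩ := (hcA o 0).mp (by rw [hsu.count_eq]; exact List.count_pos_iff.mpr ho)
    obtain ⟨sx, rfl⟩ := Quotient.exists_rep x
    exact ⟨_, hx, sx, rfl, List.count_pos_iff.mp (hox : 0 < sx.count o)⟩
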